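/- arXiv:1111.2239 — 6 statements merged into one kernel-verified Lean document; each statement's English description precedes it below -/
import Mathlib

section
/- Let I be a small category, C a 2-category, and (F, ψ) : X → X' a left transformation between oplax functors X, X' : I → C. Then (F, ψ) is an equivalence in the 2-category Oplax(I, C) — that is, there exists a left transformation (E, φ) : X' → X together with invertible modifications id_X ⇒ (E, φ)∘(F, ψ) and id_{X'} ⇒ (F, ψ)∘(E, φ) — if and only if both of the following hold: (1) for every object i of I, the 1-morphism F(i) : X(i) → X'(i) is an equivalence in C; and (2) for every morphism a of I, the 2-morphism ψ(a) is invertible. -/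
/-!
If `(E, φ)` is an inverse with invertible modifications `z : id ⇒ (E, φ)(F, ψ)` and
`w : id ⇒ (F, ψ)(E, φ)`, the modification axioms make the two pastings of `ψ(a)` with `φ(a)`
invertible; hence `ψ(a) ▷ E(j)` is split epi and `E(i) ◁ ψ(a)` is split mono, and whiskering by
an equivalence reflects both properties, so `ψ(a)` is invertible.

Conversely, promote each `F(i)` to an adjoint equivalence `F(i) ⊣ E(i)` and take for `φ(a)` the
mate of `ψ(a)⁻¹`. Taking mates is natural in the vertical 2-cells and compatible with pasting, so
the axioms of `(F, ψ)` transfer to `(E, φ)`; the triangle identities make the unit and the inverse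
of the counit modifications.
-/

open CategoryTheory Bicategory

universe w₂ v₂ u₂ v₁ u₁

/-- Data of an oplax functor from a category `I` to a 2-category `C`. -/
structure OplaxData (I : Type u₁) [Category.{v₁} I] (C : Type u₂) [Bicategory.{w₂, v₂} C] where
  obj : I → C
  map : ∀ {i j : I}, (i ⟶ j) → (obj i ⟶ obj j)
  eta : ∀ i : I, map (𝟙 i) ⟶ 𝟙 (obj i)
  theta : ∀ {i j k : I} (a : i ⟶ j) (b : j ⟶ k), map (a ≫ b) ⟶ map a ≫ map b

variable {I : Type u₁} [Category.{v₁} I] {C : Type u₂} [Bicategory.{w₂, v₂} C]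
  [Bicategory.Strict C]

/-- The axioms for an oplax functor. -/
def OplaxData.IsOplax (X : OplaxData I C) : Prop :=
  (∀ {i j : I} (a : i ⟶ j),
      X.theta (𝟙 i) a ≫ (X.eta i ▷ X.map a)
        = eqToHom (by rw [Category.id_comp, Category.id_comp])) ∧
  (∀ {i j : I} (a : i ⟶ j),
      X.theta a (𝟙 j) ≫ (X.map a ◁ X.eta j)
        = eqToHom (by rw [Category.comp_id, Category.comp_id])) ∧
  (∀ {i j k l : I} (a : i ⟶ j) (b : j ⟶ k) (c : k ⟶ l),
      X.theta a (b ≫ c) ≫ (X.map a ◁ X.theta b c)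
        = eqToHom (by rw [Category.assoc]) ≫ X.theta (a ≫ b) c ≫ (X.theta a b ▷ X.map c) ≫
            eqToHom (Category.assoc _ _ _))

/-- Data of a left transformation `(F, ψ) : X → X'`. -/
structure LTData (X X' : OplaxData I C) where
  app : ∀ i : I, X.obj i ⟶ X'.obj i
  psi : ∀ {i j : I} (a : i ⟶ j), app i ≫ X'.map a ⟶ X.map a ≫ app j

/-- The axioms for a left transformation. -/
def LTData.IsLT {X X' : OplaxData I C} (F : LTData X X') : Prop :=
  (∀ i : I,
      F.psi (𝟙 i) ≫ (X.eta i ▷ F.app i)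
        = (F.app i ◁ X'.eta i) ≫ eqToHom (by rw [Category.comp_id, Category.id_comp])) ∧
  (∀ {i j k : I} (a : i ⟶ j) (b : j ⟶ k),
      (F.app i ◁ X'.theta a b) ≫ eqToHom (Category.assoc _ _ _).symm ≫
          (F.psi a ▷ X'.map b) ≫ eqToHom (Category.assoc _ _ _) ≫ (X.map a ◁ F.psi b)
        = F.psi (a ≫ b) ≫ (X.theta a b ▷ F.app k) ≫ eqToHom (Category.assoc _ _ _))

/-- The condition for a family of 2-morphisms to be a modification. -/
def IsModification {X X' : OplaxData I C} (F F' : LTData X X')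
    (z : ∀ i : I, F.app i ⟶ F'.app i) : Prop :=
  ∀ {i j : I} (a : i ⟶ j), (z i ▷ X'.map a) ≫ F'.psi a = F.psi a ≫ (X.map a ◁ z j)

/-- The identity left transformation. -/
def LTData.id (X : OplaxData I C) : LTData X X where
  app i := 𝟙 (X.obj i)
  psi a := eqToHom (by rw [Category.id_comp, Category.comp_id])

/-- The composite of left transformations `F : X → X'` and `F' : X' → X''`. -/
def LTData.comp {X X' X'' : OplaxData I C} (F : LTData X X') (F' : LTData X' X'') :
    LTData X X'' where
  app i := F.app i ≫ F'.app i
  psi {i j} a :=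
    eqToHom (Category.assoc _ _ _) ≫ (F.app i ◁ F'.psi a) ≫
      eqToHom (Category.assoc _ _ _).symm ≫ (F.psi a ▷ F'.app j) ≫
      eqToHom (Category.assoc _ _ _)

/-- `(F, ψ)` is an equivalence in the 2-category `Oplax(I, C)`: there is a left
transformation `(E, φ) : X' → X` together with invertible modifications
`id_X ⇒ (E, φ)∘(F, ψ)` and `id_{X'} ⇒ (F, ψ)∘(E, φ)`. -/
def LTData.IsEquivalenceInOplax {X X' : OplaxData I C} (F : LTData X X') : Prop :=
  F.IsLT ∧
  ∃ (E : LTData X' X), E.IsLT ∧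
    (∃ z : ∀ i : I, (LTData.id X).app i ⟶ (F.comp E).app i,
      IsModification (LTData.id X) (F.comp E) z ∧ ∀ i, IsIso (z i)) ∧
    (∃ w : ∀ i : I, (LTData.id X').app i ⟶ (E.comp F).app i,
      IsModification (LTData.id X') (E.comp F) w ∧ ∀ i, IsIso (w i))

/-- A 1-morphism `f : x → y` in a 2-category is an equivalence if there are
`g : y → x` and invertible 2-morphisms `f ≫ g ⟶ 𝟙 x` and `g ≫ f ⟶ 𝟙 y`. -/
def IsEquivalence1Cell {x y : C} (f : x ⟶ y) : Prop :=
  ∃ (g : y ⟶ x), (∃ α : f ≫ g ⟶ 𝟙 x, IsIso α) ∧ (∃ β : g ≫ f ⟶ 𝟙 y, IsIso β)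

section SplitMorphisms

variable {𝒞 : Type*} [Category 𝒞] {x y z : 𝒞}

theorem IsSplitEpi.of_isIso_comp (f : x ⟶ y) (g : y ⟶ z) [IsIso (f ≫ g)] : IsSplitEpi g :=
  .mk' ⟨inv (f ≫ g) ≫ f, by rw [Category.assoc, IsIso.inv_hom_id]⟩

theorem IsSplitMono.of_isIso_comp (f : x ⟶ y) (g : y ⟶ z) [IsIso (f ≫ g)] : IsSplitMono f :=
  .mk' ⟨g ≫ inv (f ≫ g), by rw [← Category.assoc, IsIso.hom_inv_id]⟩

end SplitMorphisms

section Whiskering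

variable {B : Type*} [Bicategory B] {a b c : B}

theorem isSplitEpi_of_isSplitEpi_whiskerRight {p q : a ⟶ b} (ψ : p ⟶ q) {e : b ⟶ c}
    {e' : c ⟶ b} (w : 𝟙 b ⟶ e ≫ e') [hw : IsIso w] [IsSplitEpi (ψ ▷ e)] : IsSplitEpi ψ := by
  have : IsSplitEpi (ψ ▷ e ▷ e') :=
    .mk' ⟨section_ (ψ ▷ e) ▷ e', by rw [← comp_whiskerRight, IsSplitEpi.id, id_whiskerRight]⟩
  have conj : ψ = (ρ_ p).inv ≫ p ◁ w ≫ (α_ p e e').inv ≫ ψ ▷ e ▷ e' ≫ (α_ q e e').hom ≫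
      q ◁ inv w ≫ (ρ_ q).hom := by
    rw [← whiskerRight_comp_assoc, whisker_exchange_assoc]
    simp
  rw [conj]
  infer_instance

theorem isSplitMono_of_isSplitMono_whiskerLeft {p q : b ⟶ c} (ψ : p ⟶ q) {d : a ⟶ b}
    {f : b ⟶ a} (z : 𝟙 b ⟶ f ≫ d) [hz : IsIso z] [IsSplitMono (d ◁ ψ)] : IsSplitMono ψ := by
  have : IsSplitMono (f ◁ d ◁ ψ) :=
    .mk' ⟨f ◁ retraction (d ◁ ψ), by rw [← whiskerLeft_comp, IsSplitMono.id, whiskerLeft_id]⟩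
  have conj : ψ = (λ_ p).inv ≫ z ▷ p ≫ (α_ f d p).hom ≫ f ◁ d ◁ ψ ≫ (α_ f d q).inv ≫
      inv z ▷ q ≫ (λ_ q).hom := by
    rw [← comp_whiskerLeft_assoc, ← whisker_exchange_assoc]
    simp
  rw [conj]
  infer_instance

end Whiskering

section Mates

variable {B : Type*} [Bicategory B]

theorem rightAdjointSquare.vcomp_comp_leftAdjointSquare_vcomp_inv
    {a b c d e f : B} {g₁ : a ⟶ c} {g₂ : c ⟶ e} {h₁ : b ⟶ d} {h₂ : d ⟶ f}
    {r₁ : b ⟶ a} {r₂ : d ⟶ c} {r₃ : f ⟶ e}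
    (α : r₁ ≫ g₁ ⟶ h₁ ≫ r₂) (β : r₂ ≫ g₂ ⟶ h₂ ≫ r₃) [IsIso α] [IsIso β] :
    rightAdjointSquare.vcomp α β ≫ leftAdjointSquare.vcomp (inv α) (inv β) = 𝟙 _ := by
  simp [rightAdjointSquare.vcomp, leftAdjointSquare.vcomp]

section

variable {a b c d e f : B} {g : a ⟶ d} {h : b ⟶ e} {k : c ⟶ f} {r₁ : b ⟶ a} {r₂ : e ⟶ d}
  {r₃ : c ⟶ b} {r₄ : f ⟶ e} (α : r₁ ≫ g ⟶ h ≫ r₂) (β : r₃ ≫ h ⟶ k ≫ r₄)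

theorem rightAdjointSquare.isSplitEpi_whiskerRight_of_isIso_hcomp
    [IsIso (rightAdjointSquare.hcomp α β)] : IsSplitEpi (β ▷ r₂) := by
  have : IsIso (((α_ _ _ _).hom ≫ r₃ ◁ α ≫ (α_ _ _ _).inv) ≫ β ▷ r₂) := by
    convert (inferInstance : IsIso (rightAdjointSquare.hcomp α β ≫ (α_ _ _ _).inv)) using 1
    simp [rightAdjointSquare.hcomp]
  exact IsSplitEpi.of_isIso_comp ((α_ _ _ _).hom ≫ r₃ ◁ α ≫ (α_ _ _ _).inv) _

theorem rightAdjointSquare.isSplitMono_whiskerLeft_of_isIso_hcomp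
    [IsIso (rightAdjointSquare.hcomp α β)] : IsSplitMono (r₃ ◁ α) := by
  have : IsIso (r₃ ◁ α ≫ (α_ _ _ _).inv ≫ β ▷ r₂ ≫ (α_ _ _ _).hom) := by
    convert (inferInstance : IsIso ((α_ _ _ _).inv ≫ rightAdjointSquare.hcomp α β)) using 1
    simp [rightAdjointSquare.hcomp]
  exact IsSplitMono.of_isIso_comp _ ((α_ _ _ _).inv ≫ β ▷ r₂ ≫ (α_ _ _ _).hom)

end

variable {c d e f : B} {g : c ⟶ e} {h : d ⟶ f} {l₁ : c ⟶ d} {r₁ : d ⟶ c} {l₂ : e ⟶ f}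
  {r₂ : f ⟶ e} (adj₁ : l₁ ⊣ r₁) (adj₂ : l₂ ⊣ r₂)

theorem mateEquiv_whiskerRight_comp {g' : c ⟶ e} (γ : g' ⟶ g) (α : g ≫ l₂ ⟶ l₁ ≫ h) :
    mateEquiv adj₁ adj₂ (γ ▷ l₂ ≫ α) = r₁ ◁ γ ≫ mateEquiv adj₁ adj₂ α := by
  simp only [mateEquiv_apply']
  calc _ = 𝟙 _ ⊗≫ r₁ ◁ (g' ◁ adj₂.unit ≫ γ ▷ (l₂ ≫ r₂)) ⊗≫ r₁ ◁ α ▷ r₂ ⊗≫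
        adj₁.counit ▷ h ▷ r₂ ⊗≫ 𝟙 _ := by bicategory
    _ = _ := by rw [whisker_exchange]; bicategory

theorem mateEquiv_comp_whiskerLeft {h' : d ⟶ f} (α : g ≫ l₂ ⟶ l₁ ≫ h) (δ : h ⟶ h') :
    mateEquiv adj₁ adj₂ (α ≫ l₁ ◁ δ) = mateEquiv adj₁ adj₂ α ≫ δ ▷ r₂ := by
  simp only [mateEquiv_apply']
  calc _ = 𝟙 _ ⊗≫ r₁ ◁ g ◁ adj₂.unit ⊗≫ r₁ ◁ α ▷ r₂ ⊗≫
        ((r₁ ≫ l₁) ◁ δ ≫ adj₁.counit ▷ h') ▷ r₂ ⊗≫ 𝟙 _ := by bicategory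
    _ = _ := by rw [whisker_exchange]; bicategory

theorem unit_comp_whiskerLeft_mateEquiv (α : g ≫ l₂ ⟶ l₁ ≫ h) :
    𝟙 g ⊗≫ adj₁.unit ▷ g ⊗≫ l₁ ◁ mateEquiv adj₁ adj₂ α
      = 𝟙 g ⊗≫ g ◁ adj₂.unit ⊗≫ α ▷ r₂ ⊗≫ 𝟙 _ := by
  have := (mateEquiv_eq_iff adj₁ adj₂ α _).1 rfl
  simp only [Adjunction.homEquiv₁_symm_apply, Adjunction.homEquiv₂_apply] at this
  calc _ = (λ_ g).inv ≫ adj₁.unit ▷ g ≫ (α_ _ _ _).hom ≫ l₁ ◁ mateEquiv adj₁ adj₂ α := by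
        bicategory
    _ = _ := by rw [this]; bicategory

theorem mateEquiv_whiskerRight_comp_counit (α : g ≫ l₂ ⟶ l₁ ≫ h) :
    𝟙 _ ⊗≫ mateEquiv adj₁ adj₂ α ▷ l₂ ⊗≫ h ◁ adj₂.counit ⊗≫ 𝟙 h
      = r₁ ◁ α ⊗≫ adj₁.counit ▷ h ⊗≫ 𝟙 h := by
  calc _ = 𝟙 _ ⊗≫ r₁ ◁ g ◁ adj₂.unit ▷ l₂ ⊗≫ r₁ ◁ α ▷ r₂ ▷ l₂ ⊗≫
        (adj₁.counit ▷ (h ≫ r₂ ≫ l₂) ≫ 𝟙 d ◁ h ◁ adj₂.counit) ⊗≫ 𝟙 h := by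
        rw [mateEquiv_apply']; bicategory
    _ = 𝟙 _ ⊗≫ r₁ ◁ g ◁ adj₂.unit ▷ l₂ ⊗≫
        r₁ ◁ (α ▷ (r₂ ≫ l₂) ≫ (l₁ ≫ h) ◁ adj₂.counit) ⊗≫ adj₁.counit ▷ h ⊗≫ 𝟙 h := by
        rw [← whisker_exchange]; bicategory
    _ = 𝟙 _ ⊗≫ r₁ ◁ g ◁ leftZigzag adj₂.unit adj₂.counit ⊗≫ r₁ ◁ α ⊗≫
        adj₁.counit ▷ h ⊗≫ 𝟙 h := by
        rw [← whisker_exchange]; bicategory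
    _ = _ := by rw [adj₂.left_triangle]; bicategory

end Mates

section StrictCoherence

variable {a b c d : C}

theorem eqToHom_eq_associator_hom {f : a ⟶ b} {g : b ⟶ c} {h : c ⟶ d}
    (p : (f ≫ g) ≫ h = f ≫ g ≫ h) : eqToHom p = (α_ f g h).hom := by
  simp [Bicategory.Strict.associator_eqToIso]

theorem eqToHom_eq_associator_inv {f : a ⟶ b} {g : b ⟶ c} {h : c ⟶ d}
    (p : f ≫ g ≫ h = (f ≫ g) ≫ h) : eqToHom p = (α_ f g h).inv := by
  simp [Bicategory.Strict.associator_eqToIso]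

theorem eqToHom_eq_leftUnitor_hom_comp_rightUnitor_inv {f : a ⟶ b} (p : 𝟙 a ≫ f = f ≫ 𝟙 b) :
    eqToHom p = (λ_ f).hom ≫ (ρ_ f).inv := by
  simp [Bicategory.Strict.leftUnitor_eqToIso, Bicategory.Strict.rightUnitor_eqToIso]

theorem eqToHom_eq_rightUnitor_hom_comp_leftUnitor_inv {f : a ⟶ b} (p : f ≫ 𝟙 b = 𝟙 a ≫ f) :
    eqToHom p = (ρ_ f).hom ≫ (λ_ f).inv := by
  simp [Bicategory.Strict.leftUnitor_eqToIso, Bicategory.Strict.rightUnitor_eqToIso]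

end StrictCoherence

section Equivalence1Cell

variable {a b : C}

theorem isEquivalence1Cell_of_isIso {f : a ⟶ b} {g : b ⟶ a} (η : 𝟙 a ⟶ f ≫ g)
    (ζ : 𝟙 b ⟶ g ≫ f) [hη : IsIso η] [hζ : IsIso ζ] : IsEquivalence1Cell f :=
  ⟨g, ⟨inv η, inferInstance⟩, ⟨inv ζ, inferInstance⟩⟩

theorem IsEquivalence1Cell.exists_adjunction {f : a ⟶ b} (hf : IsEquivalence1Cell f) :
    ∃ (g : b ⟶ a) (adj : f ⊣ g), IsIso adj.unit ∧ IsIso adj.counit := by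
  obtain ⟨g, ⟨α, _⟩, ⟨β, _⟩⟩ := hf
  let e := Equivalence.mkOfAdjointifyCounit (asIso α).symm (asIso β)
  exact ⟨g, ⟨e.unit.hom, e.counit.hom, e.left_triangle_hom, e.right_triangle_hom⟩,
    inferInstanceAs (IsIso e.unit.hom), inferInstanceAs (IsIso e.counit.hom)⟩

end Equivalence1Cell

namespace LTData

variable {X X' X'' : OplaxData I C} {i j : I}

theorem id_psi (a : i ⟶ j) : (LTData.id X).psi a = (λ_ _).hom ≫ (ρ_ _).inv := by
  simp only [LTData.id, eqToHom_eq_leftUnitor_hom_comp_rightUnitor_inv]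

instance isIso_id_psi (a : i ⟶ j) : IsIso ((LTData.id X).psi a) := by
  dsimp only [LTData.id]; infer_instance

theorem comp_psi (F : LTData X X') (F' : LTData X' X'') (a : i ⟶ j) :
    (F.comp F').psi a = rightAdjointSquare.hcomp (F'.psi a) (F.psi a) := by
  simp only [LTData.comp, rightAdjointSquare.hcomp, eqToHom_eq_associator_hom,
    eqToHom_eq_associator_inv]

theorem isIso_comp_psi_iff (F : LTData X X') (F' : LTData X' X'') (a : i ⟶ j) :
    IsIso ((F.comp F').psi a) ↔ IsIso (rightAdjointSquare.hcomp (F'.psi a) (F.psi a)) := by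
  rw [comp_psi]
  exact Iff.rfl

theorem isLT_iff (F : LTData X X') :
    F.IsLT ↔
      (∀ i : I, F.psi (𝟙 i) ≫ X.eta i ▷ F.app i = F.app i ◁ X'.eta i ≫ (ρ_ _).hom ≫ (λ_ _).inv) ∧
      (∀ {i j k : I} (a : i ⟶ j) (b : j ⟶ k),
        F.app i ◁ X'.theta a b ≫ rightAdjointSquare.vcomp (F.psi a) (F.psi b) =
          F.psi (a ≫ b) ≫ X.theta a b ▷ F.app k) := by
  simp only [IsLT, rightAdjointSquare.vcomp, eqToHom_eq_associator_hom,
    eqToHom_eq_associator_inv, eqToHom_eq_rightUnitor_hom_comp_leftUnitor_inv]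
  refine and_congr Iff.rfl (forall₅_congr fun i j k a b => ?_)
  rw [← cancel_mono (α_ _ _ _).inv]
  simp

end LTData

section Modifications

variable {X X' : OplaxData I C} {F F' : LTData X X'}

theorem IsModification.symm {ζ : ∀ i, F.app i ≅ F'.app i}
    (hζ : IsModification F F' fun i => (ζ i).hom) : IsModification F' F fun i => (ζ i).inv := by
  intro i j a
  rw [← cancel_epi ((ζ i).hom ▷ X'.map a), ← cancel_mono (X.map a ◁ (ζ j).hom)]
  simp [← hζ a]

theorem IsModification.isIso_psi {ζ : ∀ i, F.app i ⟶ F'.app i} (hζ : IsModification F F' ζ)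
    [∀ i, IsIso (ζ i)] {i j : I} (a : i ⟶ j) [IsIso (F.psi a)] : IsIso (F'.psi a) := by
  have : IsIso (ζ i ▷ X'.map a ≫ F'.psi a) := by rw [hζ a]; infer_instance
  exact IsIso.of_isIso_comp_left (ζ i ▷ X'.map a) _

end Modifications

namespace LTData.IsEquivalenceInOplax

variable {X X' : OplaxData I C} {F : LTData X X'}

theorem isEquivalence1Cell_app (hF : F.IsEquivalenceInOplax) (i : I) :
    IsEquivalence1Cell (F.app i) := by
  obtain ⟨-, E, -, ⟨z, -, hz⟩, ⟨w, -, hw⟩⟩ := hF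
  -- In `IsEquivalenceInOplax` the 2-cell categories are reached through the quiver of
  -- `StrictBicategory.category` (and `EndMonoidal`); instance search does not identify this
  -- with the generic `homCategory` path, so these `IsIso` instances are passed by name.
  exact isEquivalence1Cell_of_isIso (z i) (w i) (hη := hz i) (hζ := hw i)

theorem isIso_psi (hF : F.IsEquivalenceInOplax) {i j : I} (a : i ⟶ j) : IsIso (F.psi a) := by
  obtain ⟨-, E, -, ⟨z, hz, hzi⟩, ⟨w, hw, hwi⟩⟩ := hF
  have := (isIso_comp_psi_iff F E a).1 (hz.isIso_psi a)
  have := (isIso_comp_psi_iff E F a).1 (hw.isIso_psi a)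
  have := rightAdjointSquare.isSplitEpi_whiskerRight_of_isIso_hcomp (E.psi a) (F.psi a)
  have := rightAdjointSquare.isSplitMono_whiskerLeft_of_isIso_hcomp (F.psi a) (E.psi a)
  have := isSplitEpi_of_isSplitEpi_whiskerRight (F.psi a) (w j) (hw := hwi j)
  have := isSplitMono_of_isSplitMono_whiskerLeft (F.psi a) (z i) (hz := hzi i)
  exact isIso_of_mono_of_isSplitEpi _

end LTData.IsEquivalenceInOplax

namespace LTData

variable {X X' : OplaxData I C} (F : LTData X X') {g : ∀ i, X'.obj i ⟶ X.obj i}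
  (adj : ∀ i, F.app i ⊣ g i) [∀ {i j : I} (a : i ⟶ j), IsIso (F.psi a)]

noncomputable def mateInverse : LTData X' X where
  app := g
  psi {i j} a := mateEquiv (adj i) (adj j) (inv (F.psi a))

theorem isLT_mateInverse (hF : F.IsLT) : (F.mateInverse adj).IsLT := by
  rw [isLT_iff] at hF ⊢
  obtain ⟨hunit, htheta⟩ := hF
  constructor
  · intro i
    have hinv : inv (F.psi (𝟙 i)) ≫ F.app i ◁ X'.eta i =
        X.eta i ▷ F.app i ≫ (λ_ _).hom ≫ (ρ_ _).inv := by
      rw [IsIso.inv_comp_eq, reassoc_of% (hunit i)]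
      simp
    calc mateEquiv (adj i) (adj i) (inv (F.psi (𝟙 i))) ≫ X'.eta i ▷ g i
        = mateEquiv (adj i) (adj i) (inv (F.psi (𝟙 i)) ≫ F.app i ◁ X'.eta i) :=
          (mateEquiv_comp_whiskerLeft _ _ _ _).symm
      _ = g i ◁ X.eta i ≫ (ρ_ _).hom ≫ (λ_ _).inv := by
          rw [hinv, mateEquiv_whiskerRight_comp, mateEquiv_leftUnitor_hom_rightUnitor_inv]
  · intro i j k a b
    have hinv : X.theta a b ▷ F.app k ≫
        leftAdjointSquare.vcomp (inv (F.psi a)) (inv (F.psi b)) =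
          inv (F.psi (a ≫ b)) ≫ F.app i ◁ X'.theta a b := by
      rw [IsIso.eq_inv_comp, ← reassoc_of% (htheta a b),
        rightAdjointSquare.vcomp_comp_leftAdjointSquare_vcomp_inv, Category.comp_id]
    calc g i ◁ X.theta a b ≫ rightAdjointSquare.vcomp
          (mateEquiv (adj i) (adj j) (inv (F.psi a))) (mateEquiv (adj j) (adj k) (inv (F.psi b)))
        = mateEquiv (adj i) (adj k) (X.theta a b ▷ F.app k ≫
            leftAdjointSquare.vcomp (inv (F.psi a)) (inv (F.psi b))) := by
          rw [mateEquiv_whiskerRight_comp, Bicategory.mateEquiv_vcomp]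
      _ = mateEquiv (adj i) (adj k) (inv (F.psi (a ≫ b))) ≫ X'.theta a b ▷ g k := by
          rw [hinv, mateEquiv_comp_whiskerLeft]

theorem isModification_unit :
    IsModification (LTData.id X) (F.comp (F.mateInverse adj)) fun i => (adj i).unit := by
  intro i j a
  rw [comp_psi, id_psi]
  calc (adj i).unit ▷ X.map a ≫
        rightAdjointSquare.hcomp (mateEquiv (adj i) (adj j) (inv (F.psi a))) (F.psi a)
      = (λ_ _).hom ≫ (𝟙 _ ⊗≫ (adj i).unit ▷ X.map a ⊗≫
          F.app i ◁ mateEquiv (adj i) (adj j) (inv (F.psi a))) ⊗≫ F.psi a ▷ g j ⊗≫ 𝟙 _ := by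
        dsimp only [rightAdjointSquare.hcomp]; bicategory
    _ = (λ_ _).hom ≫ (𝟙 _ ⊗≫ X.map a ◁ (adj j).unit ⊗≫ inv (F.psi a) ▷ g j ⊗≫ 𝟙 _) ⊗≫
          F.psi a ▷ g j ⊗≫ 𝟙 _ := by
        rw [unit_comp_whiskerLeft_mateEquiv]
    _ = (λ_ _).hom ≫ (𝟙 _ ⊗≫ X.map a ◁ (adj j).unit ⊗≫ (inv (F.psi a) ≫ F.psi a) ▷ g j ⊗≫
          𝟙 _) := by
        bicategory
    _ = ((λ_ _).hom ≫ (ρ_ _).inv) ≫ X.map a ◁ (adj j).unit := by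
        rw [IsIso.inv_hom_id]; bicategory

theorem isModification_counit :
    IsModification ((F.mateInverse adj).comp F) (LTData.id X') fun i => (adj i).counit := by
  intro i j a
  rw [comp_psi, id_psi]
  symm
  calc rightAdjointSquare.hcomp (F.psi a) (mateEquiv (adj i) (adj j) (inv (F.psi a))) ≫
        X'.map a ◁ (adj j).counit
      = (α_ _ _ _).hom ≫ g i ◁ F.psi a ≫ (𝟙 _ ⊗≫ mateEquiv (adj i) (adj j) (inv (F.psi a)) ▷
          F.app j ⊗≫ X'.map a ◁ (adj j).counit ⊗≫ 𝟙 _) ≫ (ρ_ _).inv := by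
        dsimp only [rightAdjointSquare.hcomp]; bicategory
    _ = (α_ _ _ _).hom ≫ g i ◁ F.psi a ≫ (g i ◁ inv (F.psi a) ⊗≫ (adj i).counit ▷ X'.map a ⊗≫
          𝟙 _) ≫ (ρ_ _).inv := by
        rw [mateEquiv_whiskerRight_comp_counit]
    _ = (α_ _ _ _).hom ≫ (g i ◁ (F.psi a ≫ inv (F.psi a)) ⊗≫ (adj i).counit ▷ X'.map a ⊗≫
          𝟙 _) ≫ (ρ_ _).inv := by
        bicategory
    _ = (adj i).counit ▷ X'.map a ≫ (λ_ _).hom ≫ (ρ_ _).inv := by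
        rw [IsIso.hom_inv_id]; bicategory

theorem isModification_inv_counit [∀ i, IsIso (adj i).counit] :
    IsModification (LTData.id X') ((F.mateInverse adj).comp F)
      fun i => (asIso (adj i).counit).inv := by
  have h : IsModification ((F.mateInverse adj).comp F) (LTData.id X')
      fun i => (asIso (adj i).counit).hom :=
    F.isModification_counit adj
  intro i j a
  exact h.symm a

end LTData

theorem ltdata_isEquivalence_iff_general {X X' : OplaxData I C}
    (F : LTData X X') (hF : F.IsLT) :
    F.IsEquivalenceInOplax ↔
      (∀ i : I, IsEquivalence1Cell (F.app i)) ∧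
      (∀ {i j : I} (a : i ⟶ j), IsIso (F.psi a)) := by
  refine ⟨fun h => ⟨h.isEquivalence1Cell_app, h.isIso_psi⟩, fun ⟨happ, hpsi⟩ => ?_⟩
  choose g adj hunit hcounit using fun i => (happ i).exists_adjunction
  exact ⟨hF, F.mateInverse adj, F.isLT_mateInverse adj hF, ⟨_, F.isModification_unit adj, hunit⟩,
    ⟨_, F.isModification_inv_counit adj, fun i => Iso.isIso_inv _⟩⟩

/-- A left transformation `(F, ψ) : X → X'` between oplax functors
is an equivalence in `Oplax(I, C)` if and only if every `F(i)` is an equivalence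
in `C` and every `ψ(a)` is invertible. -/
theorem ltdata_isEquivalence_iff {X X' : OplaxData I C} (hX : X.IsOplax) (hX' : X'.IsOplax)
    (F : LTData X X') (hF : F.IsLT) :
    F.IsEquivalenceInOplax ↔
      (∀ i : I, IsEquivalence1Cell (F.app i)) ∧
      (∀ {i j : I} (a : i ⟶ j), IsIso (F.psi a)) :=
  ltdata_isEquivalence_iff_general F hF
end

section
/- Let k be a commutative ring and X = (X, η, θ) : I → Cat an oplax functor from a small category I to the 2-category of small categories. Then the following data define a lax functor Mod'X = (Mod'X, Mod'η, Mod'θ) from Iᵒᵖ to the 2-category of categories: (Mod'X)(i) := Mod X(i); for each a : i → j in I, (Mod'X)(a) := (−)∘X(a) : Mod X(j) → Mod X(i) is restriction along X(a) (sending f : M → N to f∘X(a) : M∘X(a) → N∘X(a)); for each object i, (Mod'η)_i : id_{Mod X(i)} ⇒ (Mod'X)(id_i) is given on M ∈ Mod X(i) by ((Mod'η)_i M)(x) := M(η_i x) : M(x) → M(X(id_i)x) for objects x of X(i); and for each composable pair a : i → j, b : j → k in I, (Mod'θ)_{b,a} : (Mod'X)(a)∘(Mod'X)(b) ⇒ (Mod'X)(ba)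 is given on M ∈ Mod X(k) by ((Mod'θ)_{b,a} M)(x) := M(θ_{b,a}(x)) : M(X(b)(X(a)x)) → M(X(ba)x). In particular, each (Mod'η)_i M and (Mod'θ)_{b,a} M is a morphism of modules, (Mod'η)_i and (Mod'θ)_{b,a} are natural transformations, and the lax functor axioms hold. -/
/-!
Every component of `Mod'η` and `Mod'θ` is the image under a module `M` of a component of `η`
or `θ`. Naturality in `x` is `M` applied to the naturality of `η` and `θ`, naturality in `M` is
the naturality of module morphisms, and the oplax axioms of `X`, evaluated at `x` and sent
through the contravariant functor `M`, become the lax axioms of `Mod'X`: it is the reversal of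
composition by `M` that turns oplax into lax.
-/

open CategoryTheory Opposite

universe u v₂ u₂ v₁ u₁

variable {I : Type u₁} [Category.{v₁} I]

/-- Data of an oplax functor from `I` to the 2-category of small categories, with
prescribed values `obj i` on objects. -/
structure OplaxOn (obj : I → Type u₂) [∀ i, Category.{v₂} (obj i)] where
  map : ∀ {i j : I}, (i ⟶ j) → (obj i ⥤ obj j)
  eta : ∀ i : I, map (𝟙 i) ⟶ 𝟭 (obj i)
  theta : ∀ {i j k : I} (a : i ⟶ j) (b : j ⟶ k), map (a ≫ b) ⟶ map a ⋙ map b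

variable {obj : I → Type u₂} [∀ i, Category.{v₂} (obj i)]

/-- The axioms for an oplax functor `I → Cat`. -/
def OplaxOn.IsOplax (X : OplaxOn obj) : Prop :=
  (∀ {i j : I} (a : i ⟶ j),
      X.theta (𝟙 i) a ≫ Functor.whiskerRight (X.eta i) (X.map a)
        = eqToHom (by rw [Category.id_comp, Functor.id_comp])) ∧
  (∀ {i j : I} (a : i ⟶ j),
      X.theta a (𝟙 j) ≫ Functor.whiskerLeft (X.map a) (X.eta j)
        = eqToHom (by rw [Category.comp_id, Functor.comp_id])) ∧
  (∀ {i j k l : I} (a : i ⟶ j) (b : j ⟶ k) (c : k ⟶ l),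
      X.theta a (b ≫ c) ≫ Functor.whiskerLeft (X.map a) (X.theta b c)
        = eqToHom (by rw [Category.assoc]) ≫ X.theta (a ≫ b) c ≫
            Functor.whiskerRight (X.theta a b) (X.map c) ≫ eqToHom (Functor.assoc _ _ _))

variable (k : Type u) [CommRing k]

/-- The category `Mod A` of (right) `A`-modules: contravariant functors from `A`
to the category of `k`-modules. -/
abbrev ModCat (A : Type u₂) [Category.{v₂} A] : Type _ :=
  Aᵒᵖ ⥤ ModuleCat.{u} k

variable {k}
variable (X : OplaxOn obj)

/-- The restriction functor `(Mod'X)(a) = (−)∘X(a) : Mod X(j) ⥤ Mod X(i)`. -/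
def res {i j : I} (a : i ⟶ j) : ModCat k (obj j) ⥤ ModCat k (obj i) :=
  (Functor.whiskeringLeft (obj i)ᵒᵖ (obj j)ᵒᵖ (ModuleCat.{u} k)).obj (X.map a).op

/-- The component at `x` of `(Mod'η)_i M : M ⟶ (Mod'X)(id_i)(M)`, namely
`M(η_i x) : M(x) ⟶ M(X(id_i)x)`. -/
def etaApp (i : I) (M : ModCat k (obj i)) (x : (obj i)ᵒᵖ) :
    M.obj x ⟶ ((res X (𝟙 i)).obj M).obj x :=
  M.map ((X.eta i).app x.unop).op

/-- The component at `x` of `(Mod'θ)_{b,a} M : (Mod'X)(a)((Mod'X)(b)(M)) ⟶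
(Mod'X)(ba)(M)`, namely `M(θ_{b,a}(x)) : M(X(b)(X(a)x)) ⟶ M(X(ba)x)`. -/
def thetaApp {i j l : I} (a : i ⟶ j) (b : j ⟶ l) (M : ModCat k (obj l))
    (x : (obj i)ᵒᵖ) :
    ((res X a).obj ((res X b).obj M)).obj x ⟶ ((res X (a ≫ b)).obj M).obj x :=
  M.map ((X.theta a b).app x.unop).op

namespace CategoryTheory.Functor

theorem map_op_comp_map_op_eq_eqToHom {A C : Type*} [Category A] [Category C] (M : Aᵒᵖ ⥤ C)
    {x y z : A} {g : x ⟶ y} {f : y ⟶ z} (h : x = z) (hgf : g ≫ f = eqToHom h) :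
    M.map f.op ≫ M.map g.op = eqToHom (by rw [h]) := by
  rw [← M.map_comp, ← op_comp, hgf, eqToHom_op, eqToHom_map]

theorem map_op_comp_map_op_eq_of_eq_eqToHom_comp {A C : Type*} [Category A] [Category C]
    (M : Aᵒᵖ ⥤ C) {x x' y y' z : A} {g : x ⟶ y} {f : y ⟶ z} {g' : x' ⟶ y'} {f' : y' ⟶ z}
    (h : x = x') (hgf : g ≫ f = eqToHom h ≫ g' ≫ f') :
    M.map f.op ≫ M.map g.op = M.map f'.op ≫ M.map g'.op ≫ eqToHom (by rw [h]) := by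
  rw [← M.map_comp, ← op_comp, hgf]
  simp only [op_comp, eqToHom_op, M.map_comp, eqToHom_map, Category.assoc]

end CategoryTheory.Functor

/-- `(Mod'η)_i`; its components are, definitionally, `etaApp X i M`. -/
def modEta (i : I) :
    (Functor.whiskeringLeft (obj i)ᵒᵖ (obj i)ᵒᵖ (ModuleCat.{u} k)).obj (𝟭 (obj i)).op ⟶
      res X (𝟙 i) :=
  (Functor.whiskeringLeft _ _ _).map (NatTrans.op (X.eta i))

/-- `(Mod'θ)_{b,a}`; its components are, definitionally, `thetaApp X a b M`. -/
def modTheta {i j l : I} (a : i ⟶ j) (b : j ⟶ l) :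
    res (k := k) X b ⋙ res X a ⟶ res X (a ≫ b) :=
  (Functor.whiskeringLeft _ _ _).map (NatTrans.op (X.theta a b))

theorem etaApp_naturality (i : I) (M : ModCat k (obj i)) {x y : (obj i)ᵒᵖ} (f : x ⟶ y) :
    M.map f ≫ etaApp X i M y = etaApp X i M x ≫ ((res X (𝟙 i)).obj M).map f :=
  ((modEta X i).app M).naturality f

theorem app_comp_etaApp (i : I) {M N : ModCat k (obj i)} (g : M ⟶ N) (x : (obj i)ᵒᵖ) :
    g.app x ≫ etaApp X i N x = etaApp X i M x ≫ ((res X (𝟙 i)).map g).app x :=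
  NatTrans.congr_app ((modEta X i).naturality g) x

theorem thetaApp_naturality {i j l : I} (a : i ⟶ j) (b : j ⟶ l) (M : ModCat k (obj l))
    {x y : (obj i)ᵒᵖ} (f : x ⟶ y) :
    ((res X a).obj ((res X b).obj M)).map f ≫ thetaApp X a b M y
      = thetaApp X a b M x ≫ ((res X (a ≫ b)).obj M).map f :=
  ((modTheta X a b).app M).naturality f

theorem app_comp_thetaApp {i j l : I} (a : i ⟶ j) (b : j ⟶ l) {M N : ModCat k (obj l)}
    (g : M ⟶ N) (x : (obj i)ᵒᵖ) :
    ((res X a).map ((res X b).map g)).app x ≫ thetaApp X a b N x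
      = thetaApp X a b M x ≫ ((res X (a ≫ b)).map g).app x :=
  NatTrans.congr_app ((modTheta X a b).naturality g) x

namespace OplaxOn.IsOplax

variable {X}

theorem etaApp_comp_thetaApp_id_left (hX : X.IsOplax) {i j : I} (a : i ⟶ j)
    (M : ModCat k (obj j)) (x : (obj i)ᵒᵖ) :
    etaApp X i ((res X a).obj M) x ≫ thetaApp X (𝟙 i) a M x
      = eqToHom (congrArg (fun t : i ⟶ j => ((res X t).obj M).obj x)
          (Category.id_comp a)).symm :=
  M.map_op_comp_map_op_eq_eqToHom _ (by simpa using NatTrans.congr_app (hX.1 a) x.unop)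

theorem etaApp_comp_thetaApp_id_right (hX : X.IsOplax) {i j : I} (a : i ⟶ j)
    (M : ModCat k (obj j)) (x : (obj i)ᵒᵖ) :
    etaApp X j M ((X.map a).op.obj x) ≫ thetaApp X a (𝟙 j) M x
      = eqToHom (congrArg (fun t : i ⟶ j => ((res X t).obj M).obj x)
          (Category.comp_id a)).symm :=
  M.map_op_comp_map_op_eq_eqToHom _ (by simpa using NatTrans.congr_app (hX.2.1 a) x.unop)

theorem thetaApp_assoc (hX : X.IsOplax) {i j l m : I} (a : i ⟶ j) (b : j ⟶ l) (c : l ⟶ m)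
    (M : ModCat k (obj m)) (x : (obj i)ᵒᵖ) :
    thetaApp X b c M ((X.map a).op.obj x) ≫ thetaApp X a (b ≫ c) M x
      = thetaApp X a b ((res X c).obj M) x ≫ thetaApp X (a ≫ b) c M x ≫
          eqToHom (congrArg (fun t : i ⟶ m => ((res X t).obj M).obj x)
            (Category.assoc a b c)) :=
  M.map_op_comp_map_op_eq_of_eq_eqToHom_comp _
    (by simpa using NatTrans.congr_app (hX.2.2 a b c) x.unop)

end OplaxOn.IsOplax

/-- For an oplax functor `X : I → Cat`, the data
`(Mod'X, Mod'η, Mod'θ)` is a well-defined lax functor `Iᵒᵖ → Cat`: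
the components `((Mod'η)_i M)(x) = M(η_i x)` and
`((Mod'θ)_{b,a} M)(x) = M(θ_{b,a} x)` are morphisms of modules (naturality in
`x`), they are natural in `M`, and the lax functor axioms hold. -/
theorem modPrime_is_lax_functor (hX : X.IsOplax) :
    -- each (Mod'η)_i M is a morphism of modules
    (∀ (i : I) (M : ModCat k (obj i)) {x y : (obj i)ᵒᵖ} (f : x ⟶ y),
      M.map f ≫ etaApp X i M y = etaApp X i M x ≫ ((res X (𝟙 i)).obj M).map f) ∧
    -- (Mod'η)_i is a natural transformation 𝟭 ⟶ (Mod'X)(id_i)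
    (∀ (i : I) (M N : ModCat k (obj i)) (g : M ⟶ N) (x : (obj i)ᵒᵖ),
      g.app x ≫ etaApp X i N x = etaApp X i M x ≫ ((res X (𝟙 i)).map g).app x) ∧
    -- each (Mod'θ)_{b,a} M is a morphism of modules
    (∀ {i j l : I} (a : i ⟶ j) (b : j ⟶ l) (M : ModCat k (obj l))
        {x y : (obj i)ᵒᵖ} (f : x ⟶ y),
      ((res X a).obj ((res X b).obj M)).map f ≫ thetaApp X a b M y
        = thetaApp X a b M x ≫ ((res X (a ≫ b)).obj M).map f) ∧
    -- (Mod'θ)_{b,a} is a natural transformation (Mod'X)(a)∘(Mod'X)(b) ⟶ (Mod'X)(ba)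
    (∀ {i j l : I} (a : i ⟶ j) (b : j ⟶ l) (M N : ModCat k (obj l)) (g : M ⟶ N)
        (x : (obj i)ᵒᵖ),
      ((res X a).map ((res X b).map g)).app x ≫ thetaApp X a b N x
        = thetaApp X a b M x ≫ ((res X (a ≫ b)).map g).app x) ∧
    -- lax functor axioms (componentwise): unit axioms
    (∀ {i j : I} (a : i ⟶ j) (M : ModCat k (obj j)) (x : (obj i)ᵒᵖ),
      etaApp X i ((res X a).obj M) x ≫ thetaApp X (𝟙 i) a M x
        = eqToHom (congrArg (fun t : i ⟶ j => ((res X t).obj M).obj x)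
            (Category.id_comp a)).symm) ∧
    (∀ {i j : I} (a : i ⟶ j) (M : ModCat k (obj j)) (x : (obj i)ᵒᵖ),
      etaApp X j M ((X.map a).op.obj x) ≫ thetaApp X a (𝟙 j) M x
        = eqToHom (congrArg (fun t : i ⟶ j => ((res X t).obj M).obj x)
            (Category.comp_id a)).symm) ∧
    -- lax functor axioms (componentwise): associativity axiom
    (∀ {i j l m : I} (a : i ⟶ j) (b : j ⟶ l) (c : l ⟶ m) (M : ModCat k (obj m))
        (x : (obj i)ᵒᵖ),
      thetaApp X b c M ((X.map a).op.obj x) ≫ thetaApp X a (b ≫ c) M x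
        = thetaApp X a b ((res X c).obj M) x ≫ thetaApp X (a ≫ b) c M x ≫
            eqToHom (congrArg (fun t : i ⟶ m => ((res X t).obj M).obj x)
              (Category.assoc a b c))) :=
  ⟨etaApp_naturality X, fun i _ _ g x => app_comp_etaApp X i g x, thetaApp_naturality X,
    fun a b _ _ g x => app_comp_thetaApp X a b g x, hX.etaApp_comp_thetaApp_id_left,
    hX.etaApp_comp_thetaApp_id_right, hX.thetaApp_assoc⟩
end

section
/- Let I be a small category and Y' = (Y', η', θ') : Iᵒᵖ → Cat a lax functor to the 2-category of categories. Assume that for each morphism a : i → j of I the functor Y'(a) : Y'(j) → Y'(i) has a left adjoint Y(a) : Y'(i) → Y'(j), with unit ε_a : id_{Y'(i)} ⇒ Y'(a)Y(a) and counit ζ_a : Y(a)Y'(a) ⇒ id_{Y'(j)}. Set Y(i) := Y'(i) for each object i, define η_i : Y(id_i) ⇒ id_{Y(i)} as the composite ζ_{id_i} ∘ (Y(id_i)η'_i), and define θ_{b,a} : Y(ba) ⇒ Y(b)Y(a) for each composable pair a : i → j, b : j → k as the composite (ζ_{ba}Y(b)Y(a)) ∘ (Y(ba)θ'_{b,a}Y(b)Y(a))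 ∘ (Y(ba)Y'(a)ε_b Y(a)) ∘ (Y(ba)ε_a). Then Y = (Y, η, θ) is an oplax functor I → Cat. -/
/-!
Statement 8: if `Y' = (Y', η', θ') : Iᵒᵖ → Cat` is a lax functor such that each
`Y'(a)` has a left adjoint `Y(a)` (with unit `ε_a` and counit `ζ_a`), then setting
`Y(i) := Y'(i)`, `η_i := ζ_{id_i} ∘ (Y(id_i)η'_i)` and
`θ_{b,a} := (ζ_{ba}Y(b)Y(a)) ∘ (Y(ba)θ'_{b,a}Y(b)Y(a)) ∘ (Y(ba)Y'(a)ε_b Y(a)) ∘ (Y(ba)ε_a)`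
yields an oplax functor `Y = (Y, η, θ) : I → Cat`.
-/

open CategoryTheory Opposite

universe v₂ u₂ v₁ u₁

variable {I : Type u₁} [Category.{v₁} I]

/-- Data of a lax functor from `I` to the 2-category of categories, with
prescribed values `obj i` on objects. -/
structure LaxOn (obj : I → Type u₂) [∀ i, Category.{v₂} (obj i)] where
  map : ∀ {i j : I}, (i ⟶ j) → (obj i ⥤ obj j)
  eta : ∀ i : I, 𝟭 (obj i) ⟶ map (𝟙 i)
  theta : ∀ {i j k : I} (a : i ⟶ j) (b : j ⟶ k), map a ⋙ map b ⟶ map (a ≫ b)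

variable {obj : I → Type u₂} [∀ i, Category.{v₂} (obj i)]

/-- The axioms for a lax functor `I → Cat`. -/
def LaxOn.IsLax (Y : LaxOn obj) : Prop :=
  (∀ {i j : I} (a : i ⟶ j),
      Functor.whiskerRight (Y.eta i) (Y.map a) ≫ Y.theta (𝟙 i) a
        = eqToHom (by rw [Category.id_comp, Functor.id_comp])) ∧
  (∀ {i j : I} (a : i ⟶ j),
      Functor.whiskerLeft (Y.map a) (Y.eta j) ≫ Y.theta a (𝟙 j)
        = eqToHom (by rw [Category.comp_id, Functor.comp_id])) ∧
  (∀ {i j k l : I} (a : i ⟶ j) (b : j ⟶ k) (c : k ⟶ l),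
      Functor.whiskerLeft (Y.map a) (Y.theta b c) ≫ Y.theta a (b ≫ c)
        = eqToHom (Functor.assoc _ _ _).symm ≫ Functor.whiskerRight (Y.theta a b) (Y.map c) ≫
            Y.theta (a ≫ b) c ≫ eqToHom (by rw [Category.assoc]))

variable {objf : I → Type u₂} [∀ i, Category.{v₂} (objf i)]

/-- The oplax functor `Y : I → Cat` obtained from a lax functor `Y' : Iᵒᵖ → Cat`
whose 1-morphism components all have left adjoints: `Y(i) := Y'(i)`, `Y(a) := L a`,
`η_i := ζ_{id_i} ∘ (Y(id_i)η'_i)`, and `θ_{b,a}` the composite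
`(ζ_{ba}Y(b)Y(a)) ∘ (Y(ba)θ'_{b,a}Y(b)Y(a)) ∘ (Y(ba)Y'(a)ε_b Y(a)) ∘ (Y(ba)ε_a)`. -/
def inducedOplaxOfLax (Y' : LaxOn (fun i : Iᵒᵖ => objf i.unop))
    (L : ∀ {i j : I}, (i ⟶ j) → (objf i ⥤ objf j))
    (adj : ∀ {i j : I} (a : i ⟶ j), L a ⊣ Y'.map a.op) :
    OplaxOn objf where
  map a := L a
  eta i := Functor.whiskerRight (Y'.eta (op i)) (L (𝟙 i)) ≫ (adj (𝟙 i)).counit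
  theta {i j k} a b :=
    Functor.whiskerRight (adj a).unit (L (a ≫ b)) ≫
      Functor.whiskerLeft (L a) (Functor.whiskerRight (Functor.whiskerRight (adj b).unit (Y'.map a.op)) (L (a ≫ b))) ≫
      Functor.whiskerLeft (L a ⋙ L b) (Functor.whiskerRight (Y'.theta b.op a.op) (L (a ≫ b))) ≫
      Functor.whiskerLeft (L a ⋙ L b) (adj (a ≫ b)).counit

/-! The oplax structure of `Y` is the conjugate (mate) of the lax structure of `Y'` under the
adjunctions `Y(a) ⊣ Y'(a)`. Conjugation is a bijection compatible with vertical composition,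
whiskering, unitors, associators and transport along equal morphisms of `I`, so each oplax axiom
for `Y` is the conjugate of the corresponding lax axiom for `Y'`. -/

section Conjugates

variable {A B C D : Type*} [Category A] [Category B] [Category C] [Category D]

lemma conjugateEquiv_symm_whiskerLeft {L₁ L₂ : B ⥤ C} {R₁ R₂ : C ⥤ B} {L : A ⥤ B} {R : B ⥤ A}
    (adj₁ : L₁ ⊣ R₁) (adj₂ : L₂ ⊣ R₂) (adj : L ⊣ R) (σ : R₁ ⟶ R₂) :
    (conjugateEquiv (adj.comp adj₁) (adj.comp adj₂)).symm (Functor.whiskerRight σ R) =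
      Functor.whiskerLeft L ((conjugateEquiv adj₁ adj₂).symm σ) := by
  rw [Equiv.symm_apply_eq, conjugateEquiv_whiskerLeft, Equiv.apply_symm_apply]

lemma conjugateEquiv_symm_whiskerRight {L₁ L₂ : A ⥤ B} {R₁ R₂ : B ⥤ A} {L : B ⥤ C} {R : C ⥤ B}
    (adj₁ : L₁ ⊣ R₁) (adj₂ : L₂ ⊣ R₂) (adj : L ⊣ R) (σ : R₁ ⟶ R₂) :
    (conjugateEquiv (adj₁.comp adj) (adj₂.comp adj)).symm (Functor.whiskerLeft R σ) =
      Functor.whiskerRight ((conjugateEquiv adj₁ adj₂).symm σ) L := by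
  rw [Equiv.symm_apply_eq, conjugateEquiv_whiskerRight, Equiv.apply_symm_apply]

lemma conjugateEquiv_symm_eqToHom_assoc {L₀₁ : A ⥤ B} {R₁₀ : B ⥤ A} {L₁₂ : B ⥤ C}
    {R₂₁ : C ⥤ B} {L₂₃ : C ⥤ D} {R₃₂ : D ⥤ C}
    (adj₀₁ : L₀₁ ⊣ R₁₀) (adj₁₂ : L₁₂ ⊣ R₂₁) (adj₂₃ : L₂₃ ⊣ R₃₂) :
    (conjugateEquiv (adj₀₁.comp (adj₁₂.comp adj₂₃)) ((adj₀₁.comp adj₁₂).comp adj₂₃)).symm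
      (eqToHom (Functor.assoc R₃₂ R₂₁ R₁₀)) = eqToHom (Functor.assoc L₀₁ L₁₂ L₂₃) := by
  rw [Equiv.symm_apply_eq,
    show eqToHom (Functor.assoc L₀₁ L₁₂ L₂₃) = (Functor.associator _ _ _).hom by ext; simp,
    show eqToHom (Functor.assoc R₃₂ R₂₁ R₁₀) = (Functor.associator _ _ _).hom by ext; simp,
    conjugateEquiv_associator_hom]

variable {ι : Type*} {L : ι → A ⥤ B} {R : ι → B ⥤ A} (adj : ∀ t, L t ⊣ R t) {t t' : ι}

lemma conjugateEquiv_symm_eqToHom (e : t = t') :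
    (conjugateEquiv (adj t) (adj t')).symm (eqToHom (congrArg R e)) =
      eqToHom (congrArg L e.symm) := by
  subst e
  simp

lemma conjugateEquiv_symm_eqToHom_id_comp (e : t = t') (hR : R t ⋙ 𝟭 A = R t')
    (hL : L t' = 𝟭 A ⋙ L t) :
    (conjugateEquiv (Adjunction.id.comp (adj t)) (adj t')).symm (eqToHom hR) = eqToHom hL := by
  subst e
  rw [Equiv.symm_apply_eq]
  ext
  simp

lemma conjugateEquiv_symm_eqToHom_comp_id (e : t = t') (hR : 𝟭 B ⋙ R t = R t')
    (hL : L t' = L t ⋙ 𝟭 B) :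
    (conjugateEquiv ((adj t).comp Adjunction.id) (adj t')).symm (eqToHom hR) = eqToHom hL := by
  subst e
  rw [Equiv.symm_apply_eq]
  ext
  simp

end Conjugates

structure OplaxOn.IsConjugate (X : OplaxOn objf) (Y' : LaxOn (fun i : Iᵒᵖ => objf i.unop))
    (adj : ∀ {i j : I} (a : i ⟶ j), X.map a ⊣ Y'.map a.op) : Prop where
  eta (i : I) : X.eta i = (conjugateEquiv Adjunction.id (adj (𝟙 i))).symm (Y'.eta (op i))
  theta {i j k : I} (a : i ⟶ j) (b : j ⟶ k) :
    X.theta a b = (conjugateEquiv ((adj a).comp (adj b)) (adj (a ≫ b))).symm (Y'.theta b.op a.op)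

namespace OplaxOn.IsConjugate

variable {X : OplaxOn objf} {Y' : LaxOn (fun i : Iᵒᵖ => objf i.unop)}
  {adj : ∀ {i j : I} (a : i ⟶ j), X.map a ⊣ Y'.map a.op}

lemma theta_id_comp (hX : X.IsConjugate Y' adj) (hY' : Y'.IsLax) {i j : I} (a : i ⟶ j) :
    X.theta (𝟙 i) a ≫ Functor.whiskerRight (X.eta i) (X.map a) =
      eqToHom (by rw [Category.id_comp, Functor.id_comp]) := by
  rw [hX.theta, hX.eta, ← conjugateEquiv_symm_whiskerRight Adjunction.id (adj (𝟙 i)) (adj a),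
    conjugateEquiv_symm_comp]
  exact (congrArg _ (hY'.2.1 a.op)).trans
    (conjugateEquiv_symm_eqToHom_id_comp (fun t => adj t) (Category.id_comp a).symm _ _)

lemma theta_comp_id (hX : X.IsConjugate Y' adj) (hY' : Y'.IsLax) {i j : I} (a : i ⟶ j) :
    X.theta a (𝟙 j) ≫ Functor.whiskerLeft (X.map a) (X.eta j) =
      eqToHom (by rw [Category.comp_id, Functor.comp_id]) := by
  rw [hX.theta, hX.eta, ← conjugateEquiv_symm_whiskerLeft Adjunction.id (adj (𝟙 j)) (adj a),
    conjugateEquiv_symm_comp]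
  exact (congrArg _ (hY'.1 a.op)).trans
    (conjugateEquiv_symm_eqToHom_comp_id (fun t => adj t) (Category.comp_id a).symm _ _)

lemma theta_assoc (hX : X.IsConjugate Y' adj) (hY' : Y'.IsLax) {i j k l : I}
    (a : i ⟶ j) (b : j ⟶ k) (c : k ⟶ l) :
    X.theta a (b ≫ c) ≫ Functor.whiskerLeft (X.map a) (X.theta b c) =
      eqToHom (by rw [Category.assoc]) ≫ X.theta (a ≫ b) c ≫
        Functor.whiskerRight (X.theta a b) (X.map c) ≫ eqToHom (Functor.assoc _ _ _) := by
  rw [hX.theta, hX.theta, hX.theta, hX.theta,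
    ← conjugateEquiv_symm_whiskerLeft _ _ (adj a), conjugateEquiv_symm_comp,
    ← conjugateEquiv_symm_whiskerRight _ _ (adj c),
    ← conjugateEquiv_symm_eqToHom (fun t => adj t) (Category.assoc a b c),
    ← conjugateEquiv_symm_eqToHom_assoc (adj a) (adj b) (adj c),
    conjugateEquiv_symm_comp, conjugateEquiv_symm_comp, conjugateEquiv_symm_comp]
  congr 1
  simp only [Category.assoc]
  -- `(a ≫ b).op` and `b.op ≫ a.op` agree only definitionally
  erw [reassoc_of% (hY'.2.2 c.op b.op a.op)]
  simp

lemma isOplax (hX : X.IsConjugate Y' adj) (hY' : Y'.IsLax) : X.IsOplax :=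
  ⟨hX.theta_id_comp hY', hX.theta_comp_id hY', hX.theta_assoc hY'⟩

end OplaxOn.IsConjugate

lemma inducedOplaxOfLax_isConjugate (Y' : LaxOn (fun i : Iᵒᵖ => objf i.unop))
    (L : ∀ {i j : I}, (i ⟶ j) → (objf i ⥤ objf j))
    (adj : ∀ {i j : I} (a : i ⟶ j), L a ⊣ Y'.map a.op) :
    (inducedOplaxOfLax Y' L adj).IsConjugate Y' adj where
  eta i := by
    change _ = (conjugateEquiv Adjunction.id (adj (𝟙 i))).symm (Y'.eta (op i))
    ext x
    simp [inducedOplaxOfLax]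
  theta a b := by
    change _ = (conjugateEquiv ((adj a).comp (adj b)) (adj (a ≫ b))).symm (Y'.theta b.op a.op)
    ext x
    simp [inducedOplaxOfLax]

/-- Let `Y' : Iᵒᵖ → Cat` be a lax functor such that each `Y'(a)`
has a left adjoint `Y(a) = L a` (with unit `ε_a` and counit `ζ_a`).  Then the data
`Y(i) := Y'(i)`, `Y(a) := L a`, with the structure 2-morphisms defined above,
constitute an oplax functor `I → Cat`. -/
theorem inducedOplaxOfLax_isOplax (Y' : LaxOn (fun i : Iᵒᵖ => objf i.unop))
    (hY' : Y'.IsLax) (L : ∀ {i j : I}, (i ⟶ j) → (objf i ⥤ objf j))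
    (adj : ∀ {i j : I} (a : i ⟶ j), L a ⊣ Y'.map a.op) :
    (inducedOplaxOfLax Y' L adj).IsOplax :=
  (inducedOplaxOfLax_isConjugate Y' L adj).isOplax hY'
end

section
/- Let X = (X, η, θ) : I → Cat be an oplax functor from a small category I to the 2-category of small categories. For each object i of I, let Y(i) be a small category and L_i : X(i) → Y(i) a functor with right adjoint R_i : Y(i) → X(i), unit ε_i : id_{X(i)} ⇒ R_iL_i and counit ζ_i : L_iR_i ⇒ id_{Y(i)}. For each a : i → j define Y(a) := L_j X(a) R_i : Y(i) → Y(j); define η'_i : Y(id_i) ⇒ id_{Y(i)} as the composite ζ_i ∘ (L_i η_i R_i); and for each composable pair a : i → j, b : j → k define θ'_{b,a} : Y(ba) ⇒ Y(b)Y(a) as the composite (L_k X(b) ε_j X(a) R_i) ∘ (L_k θ_{b,a} R_i). Then Y = (Y, η', θ') is an oplax functor I → Cat, called the oplax functor induced from X by the adjoint pairs (L_i, R_i). -/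
/-!
Componentwise at `y`, each axiom for the induced data is `L` applied to the same axiom for `X`
at `R y`, up to the units `ε` that `θ'` inserts. In the unit laws these are absorbed by a
triangle identity of the adjunction (after moving `η` past `ε` by naturality); in the
associativity law, naturality of `θ` and of `ε` moves them to the same place on both sides.
-/

open CategoryTheory

universe v₂ u₂ v₁ u₁

variable {I : Type u₁} [Category.{v₁} I]

variable {obj : I → Type u₂} [∀ i, Category.{v₂} (obj i)]

variable {objY : I → Type u₂} [∀ i, Category.{v₂} (objY i)]

def inducedByAdjointPairs (X : OplaxOn obj)
    (L : ∀ i : I, obj i ⥤ objY i) (R : ∀ i : I, objY i ⥤ obj i)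
    (adj : ∀ i : I, L i ⊣ R i) : OplaxOn objY where
  map {i j} a := R i ⋙ X.map a ⋙ L j
  eta i :=
    Functor.whiskerLeft (R i) (Functor.whiskerRight (X.eta i) (L i)) ≫ (adj i).counit
  theta {i j k} a b :=
    Functor.whiskerLeft (R i) (Functor.whiskerRight (X.theta a b) (L k)) ≫
      Functor.whiskerLeft (R i ⋙ X.map a) (Functor.whiskerRight (adj j).unit (X.map b ⋙ L k))

namespace OplaxOn

variable (X : OplaxOn obj)

def LeftUnitalAt {i j : I} (a : i ⟶ j) : Prop :=
  X.theta (𝟙 i) a ≫ Functor.whiskerRight (X.eta i) (X.map a)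
    = eqToHom (by rw [Category.id_comp, Functor.id_comp])

def RightUnitalAt {i j : I} (a : i ⟶ j) : Prop :=
  X.theta a (𝟙 j) ≫ Functor.whiskerLeft (X.map a) (X.eta j)
    = eqToHom (by rw [Category.comp_id, Functor.comp_id])

def AssociativeAt {i j k l : I} (a : i ⟶ j) (b : j ⟶ k) (c : k ⟶ l) : Prop :=
  X.theta a (b ≫ c) ≫ Functor.whiskerLeft (X.map a) (X.theta b c)
    = eqToHom (by rw [Category.assoc]) ≫ X.theta (a ≫ b) c ≫
        Functor.whiskerRight (X.theta a b) (X.map c) ≫ eqToHom (Functor.assoc _ _ _)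

theorem isOplax_iff :
    X.IsOplax ↔ (∀ {i j : I} (a : i ⟶ j), X.LeftUnitalAt a) ∧
      (∀ {i j : I} (a : i ⟶ j), X.RightUnitalAt a) ∧
      ∀ {i j k l : I} (a : i ⟶ j) (b : j ⟶ k) (c : k ⟶ l), X.AssociativeAt a b c :=
  Iff.rfl

variable {X} (L : ∀ i : I, obj i ⥤ objY i) (R : ∀ i : I, objY i ⥤ obj i)
  (adj : ∀ i : I, L i ⊣ R i)

theorem LeftUnitalAt.inducedByAdjointPairs {i j : I} {a : i ⟶ j} (h : X.LeftUnitalAt a) :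
    (inducedByAdjointPairs X L R adj).LeftUnitalAt a := by
  ext y
  have hy := NatTrans.congr_app h ((R i).obj y)
  simp only [NatTrans.comp_app, Functor.whiskerRight_app, eqToHom_app] at hy ⊢
  have transpose (f : (X.map (𝟙 i)).obj ((R i).obj y) ⟶ (R i).obj y) :
      (adj i).unit.app _ ≫ (R i).map ((L i).map f ≫ (adj i).counit.app y) = f := by
    simp
  calc
    _ = (L j).map ((X.theta (𝟙 i) a).app ((R i).obj y) ≫
          (X.map a).map ((X.eta i).app ((R i).obj y))) := by
      simp only [_root_.inducedByAdjointPairs, NatTrans.comp_app, Functor.whiskerLeft_app,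
        Functor.whiskerRight_app, Functor.comp_obj, Functor.comp_map]
      simp only [← Functor.map_comp, Category.assoc, transpose]
    _ = _ := by simp only [hy, eqToHom_map]; rfl

theorem RightUnitalAt.inducedByAdjointPairs {i j : I} {a : i ⟶ j} (h : X.RightUnitalAt a) :
    (inducedByAdjointPairs X L R adj).RightUnitalAt a := by
  ext y
  have hy := NatTrans.congr_app h ((R i).obj y)
  simp only [NatTrans.comp_app, Functor.whiskerLeft_app, eqToHom_app] at hy ⊢
  have hη := (X.eta j).naturality ((adj j).unit.app ((X.map a).obj ((R i).obj y)))
  simp only [Functor.comp_obj, Functor.id_obj, Functor.id_map] at hη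
  calc
    _ = (L j).map ((X.theta a (𝟙 j)).app ((R i).obj y) ≫
          (X.eta j).app ((X.map a).obj ((R i).obj y))) := by
      simp only [_root_.inducedByAdjointPairs, NatTrans.comp_app, Functor.whiskerLeft_app,
        Functor.whiskerRight_app, Functor.comp_obj, Functor.comp_map]
      simp only [Category.assoc, ← Functor.map_comp_assoc, hη]
      simp
    _ = _ := by simp only [hy, eqToHom_map]; rfl

theorem AssociativeAt.inducedByAdjointPairs {i j k l : I} {a : i ⟶ j} {b : j ⟶ k} {c : k ⟶ l}
    (h : X.AssociativeAt a b c) : (inducedByAdjointPairs X L R adj).AssociativeAt a b c := by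
  ext y
  have hy := NatTrans.congr_app h ((R i).obj y)
  have hθ := (X.theta b c).naturality ((adj j).unit.app ((X.map a).obj ((R i).obj y)))
  have hε := (adj k).unit_naturality ((X.theta a b).app ((R i).obj y) ≫
    (X.map b).map ((adj j).unit.app ((X.map a).obj ((R i).obj y))))
  simp only [Functor.comp_obj, Functor.id_obj, Functor.comp_map] at hθ hε
  simp only [NatTrans.comp_app, Functor.whiskerLeft_app, Functor.whiskerRight_app, eqToHom_app,
    Functor.comp_obj, eqToHom_refl, Category.comp_id] at hy ⊢
  simp only [_root_.inducedByAdjointPairs, NatTrans.comp_app, Functor.whiskerLeft_app,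
    Functor.whiskerRight_app, Functor.comp_obj, Functor.comp_map]
  simp only [← Functor.map_comp, Category.assoc, reassoc_of% hθ, hε, reassoc_of% hy]
  simp [eqToHom_map]

end OplaxOn

/-- Given an oplax functor `X : I → Cat` and adjoint pairs
`L_i ⊣ R_i` (`L_i : X(i) ⥤ Y(i)`, `R_i : Y(i) ⥤ X(i)`), the induced data
`Y = (Y, η', θ')` is an oplax functor `I → Cat`. -/
theorem inducedByAdjointPairs_isOplax (X : OplaxOn obj) (hX : X.IsOplax)
    (L : ∀ i : I, obj i ⥤ objY i) (R : ∀ i : I, objY i ⥤ obj i)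
    (adj : ∀ i : I, L i ⊣ R i) :
    (inducedByAdjointPairs X L R adj).IsOplax := by
  obtain ⟨hleft, hright, hassoc⟩ := (OplaxOn.isOplax_iff X).mp hX
  exact (OplaxOn.isOplax_iff _).mpr
    ⟨fun a => (hleft a).inducedByAdjointPairs L R adj,
      fun a => (hright a).inducedByAdjointPairs L R adj,
      fun a b c => (hassoc a b c).inducedByAdjointPairs L R adj⟩
end

section
/- Let X = (X, η, θ) : I → Cat be an oplax functor, and for each object i of I let L_i : X(i) → Y(i) be a functor with right adjoint R_i : Y(i) → X(i), unit ε_i and counit ζ_i; let Y = (Y, η', θ') be the induced oplax functor with Y(a) := L_j X(a) R_i, η'_i := ζ_i ∘ (L_i η_i R_i), θ'_{b,a} := (L_k X(b) ε_j X(a) R_i) ∘ (L_k θ_{b,a} R_i). Then the family (R_i)_{i} extends to a left transformation (R, φ^R) : Y → X in Oplax(I, Cat), where R(i) := R_i for each object i and φ^R(a) := ε_j X(a) R_i : X(a)R_i ⇒ R_j L_j X(a) R_i = R(j)Y(a) for each a : i → j. -/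
/-!
Componentwise at `y : Y(i)`, with `x = R_i y`, the unit `η'_i` is the adjunct `L_i(η_i x) ≫ ζ_i y`
of `η_i x`, and `θ'_{b,a}` is `L_k` applied to `θ_{b,a} x ≫ X(b)(ε_j (X(a) x))`. Precomposing
`R(f)` with the unit `ε` undoes the adjunction: for the unit axiom this returns `η_i x`, and for the
composition axiom naturality of `ε_k` moves it past `R_k L_k`, which leaves exactly the other side.
-/

open CategoryTheory

universe v₂ u₂ v₁ u₁

variable {I : Type u₁} [Category.{v₁} I]

variable {obj : I → Type u₂} [∀ i, Category.{v₂} (obj i)]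
variable {objY : I → Type u₂} [∀ i, Category.{v₂} (objY i)]

/-- Data of a left transformation between oplax functors `I → Cat`. -/
structure LTOn {obj : I → Type u₂} [∀ i, Category.{v₂} (obj i)]
    {obj' : I → Type u₂} [∀ i, Category.{v₂} (obj' i)]
    (X : OplaxOn obj) (X' : OplaxOn obj') where
  app : ∀ i : I, obj i ⥤ obj' i
  psi : ∀ {i j : I} (a : i ⟶ j), app i ⋙ X'.map a ⟶ X.map a ⋙ app j

/-- The axioms for a left transformation between oplax functors `I → Cat`. -/
def LTOn.IsLT {obj : I → Type u₂} [∀ i, Category.{v₂} (obj i)]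
    {obj' : I → Type u₂} [∀ i, Category.{v₂} (obj' i)]
    {X : OplaxOn obj} {X' : OplaxOn obj'} (F : LTOn X X') : Prop :=
  (∀ i : I,
      F.psi (𝟙 i) ≫ Functor.whiskerRight (X.eta i) (F.app i)
        = Functor.whiskerLeft (F.app i) (X'.eta i) ≫
            eqToHom (by rw [Functor.comp_id, Functor.id_comp])) ∧
  (∀ {i j k : I} (a : i ⟶ j) (b : j ⟶ k),
      Functor.whiskerLeft (F.app i) (X'.theta a b) ≫ eqToHom (Functor.assoc _ _ _).symm ≫
          Functor.whiskerRight (F.psi a) (X'.map b) ≫ eqToHom (Functor.assoc _ _ _) ≫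
          Functor.whiskerLeft (X.map a) (F.psi b)
        = F.psi (a ≫ b) ≫ Functor.whiskerRight (X.theta a b) (F.app k) ≫
            eqToHom (Functor.assoc _ _ _))

/-- The extension `(R, φ^R) : Y → X` of the family `(R_i)_i`, with
`φ^R(a) := ε_j X(a) R_i`. -/
def adjointPairsRightLT (X : OplaxOn obj)
    (L : ∀ i : I, obj i ⥤ objY i) (R : ∀ i : I, objY i ⥤ obj i)
    (adj : ∀ i : I, L i ⊣ R i) :
    LTOn (inducedByAdjointPairs X L R adj) X where
  app i := R i
  psi {i j} a := Functor.whiskerLeft (R i ⋙ X.map a) (adj j).unit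

section

variable (X : OplaxOn obj) (L : ∀ i : I, obj i ⥤ objY i) (R : ∀ i : I, objY i ⥤ obj i)
    (adj : ∀ i : I, L i ⊣ R i)

lemma inducedByAdjointPairs_eta_app (i : I) (y : objY i) :
    ((inducedByAdjointPairs X L R adj).eta i).app y =
      ((adj i).homEquiv _ _).symm ((X.eta i).app ((R i).obj y)) := by
  simp [inducedByAdjointPairs, Adjunction.homEquiv_counit]

lemma inducedByAdjointPairs_theta_app {i j k : I} (a : i ⟶ j) (b : j ⟶ k) (y : objY i) :
    ((inducedByAdjointPairs X L R adj).theta a b).app y =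
      (L k).map ((X.theta a b).app ((R i).obj y) ≫
        (X.map b).map ((adj j).unit.app ((X.map a).obj ((R i).obj y)))) := by
  simp [inducedByAdjointPairs]

lemma adjointPairsRightLT_psi_app {i j : I} (a : i ⟶ j) (y : objY i) :
    ((adjointPairsRightLT X L R adj).psi a).app y =
      (adj j).unit.app ((X.map a).obj ((R i).obj y)) := rfl

end

theorem adjointPairsRightLT_isLT_general (X : OplaxOn obj)
    (L : ∀ i : I, obj i ⥤ objY i) (R : ∀ i : I, objY i ⥤ obj i)
    (adj : ∀ i : I, L i ⊣ R i) :
    (adjointPairsRightLT X L R adj).IsLT := by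
  refine ⟨fun i => ?_, fun a b => ?_⟩
  · ext y
    simp only [NatTrans.comp_app, Functor.whiskerLeft_app, Functor.whiskerRight_app, eqToHom_refl,
      Category.comp_id, adjointPairsRightLT_psi_app, inducedByAdjointPairs_eta_app]
    exact ((adj i).homEquiv_unit _ _ _).symm.trans (Equiv.apply_symm_apply _ _)
  · ext y
    simp only [NatTrans.comp_app, Functor.whiskerLeft_app, Functor.whiskerRight_app, eqToHom_refl,
      Category.comp_id, Category.id_comp, adjointPairsRightLT_psi_app,
      inducedByAdjointPairs_theta_app]
    exact (Category.assoc _ _ _).symm.trans ((adj _).unit_naturality _).symm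

/-- Given an oplax functor `X : I → Cat` and adjoint pairs
`L_i ⊣ R_i` (with unit `ε_i`, counit `ζ_i`), let `Y` be the induced oplax functor
(`Y(a) = L_j X(a) R_i`).  Then the family `(R_i)_i`, together with
`φ^R(a) := ε_j X(a) R_i`, is a left transformation `(R, φ^R) : Y → X`. -/
theorem adjointPairsRightLT_isLT (X : OplaxOn obj) (hX : X.IsOplax)
    (L : ∀ i : I, obj i ⥤ objY i) (R : ∀ i : I, objY i ⥤ obj i)
    (adj : ∀ i : I, L i ⊣ R i) :
    (adjointPairsRightLT X L R adj).IsLT :=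
  adjointPairsRightLT_isLT_general X L R adj
end

section
/- Let X = (X, η, θ) : I → Cat be an oplax functor, and for each object i of I let L_i : X(i) → Y(i) be a functor with right adjoint R_i : Y(i) → X(i), unit ε_i and counit ζ_i; let Y = (Y, η', θ') be the induced oplax functor with Y(a) := L_j X(a) R_i, and let (R, φ^R) : Y → X be the left transformation with R(i) := R_i and φ^R(a) := ε_j X(a) R_i. Assume moreover that every unit ε_i is a natural isomorphism. Then: (a) every φ^R(a) is a natural isomorphism, i.e., (R, φ^R) is I-equivariant; and (b) the family (L_i)_i extends to an I-equivariant left transformation (L, φ^L) : X → Y, where L(i) := L_i for each object i and φ^L(a) := L_j X(a) ε_i^{-1} : Y(a)L_i = L_j X(a) R_i L_i ⇒ L_j X(a) = L(j)X(a) for each a : i → j, and every φ^L(a) is a natural isomorphism. -/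
/-!
Since every unit `ε_i` is invertible, `φ^R(a) = ε_j X(a) R_i` and `φ^L(a) = L_j X(a) ε_i⁻¹` are
whiskerings of isomorphisms. The two axioms of a left transformation for `(L, φ^L)` are checked
componentwise, under `L_k`: they reduce to naturality of `η`, `θ` and `ε`, together with the
triangle identity `L ε ≫ ζ L = 1`, which for invertible `ε` says `L(ε⁻¹) = ζ L`.
-/

open CategoryTheory

universe v₂ u₂ v₁ u₁

variable {I : Type u₁} [Category.{v₁} I]

variable {obj : I → Type u₂} [∀ i, Category.{v₂} (obj i)]
variable {objY : I → Type u₂} [∀ i, Category.{v₂} (objY i)]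

/-- `(L, φ^L) : X → Y` with `φ^L(a) := L_j X(a) ε_i⁻¹`. -/
noncomputable def adjointPairsLeftLT (X : OplaxOn obj)
    (L : ∀ i : I, obj i ⥤ objY i) (R : ∀ i : I, objY i ⥤ obj i)
    (adj : ∀ i : I, L i ⊣ R i) (hu : ∀ i : I, IsIso (adj i).unit) :
    LTOn X (inducedByAdjointPairs X L R adj) where
  app i := L i
  psi {i j} a :=
    haveI := hu i
    Functor.whiskerRight (inv (adj i).unit) (X.map a ⋙ L j)

section

variable (X : OplaxOn obj) (L : ∀ i : I, obj i ⥤ objY i) (R : ∀ i : I, objY i ⥤ obj i)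
  (adj : ∀ i : I, L i ⊣ R i)

theorem isIso_adjointPairsRightLT_psi {i j : I} (a : i ⟶ j) [IsIso (adj j).unit] :
    IsIso ((adjointPairsRightLT X L R adj).psi a) :=
  Functor.isIso_whiskerLeft _ _

variable (hu : ∀ i : I, IsIso (adj i).unit)

theorem isIso_adjointPairsLeftLT_psi {i j : I} (a : i ⟶ j) :
    IsIso ((adjointPairsLeftLT X L R adj hu).psi a) :=
  Functor.isIso_whiskerRight _ _

theorem adjointPairsLeftLT_psi_id (i : I) :
    (adjointPairsLeftLT X L R adj hu).psi (𝟙 i) ≫ Functor.whiskerRight (X.eta i) (L i) =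
      Functor.whiskerLeft (L i) ((inducedByAdjointPairs X L R adj).eta i) ≫
        eqToHom (by rw [Functor.comp_id, Functor.id_comp]) := by
  ext x
  simp [adjointPairsLeftLT, inducedByAdjointPairs, ← Functor.map_comp_assoc]

theorem adjointPairsLeftLT_psi_comp {i j k : I} (a : i ⟶ j) (b : j ⟶ k) :
    Functor.whiskerLeft (L i) ((inducedByAdjointPairs X L R adj).theta a b) ≫
        eqToHom (Functor.assoc _ _ _).symm ≫
        Functor.whiskerRight ((adjointPairsLeftLT X L R adj hu).psi a)
          ((inducedByAdjointPairs X L R adj).map b) ≫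
        eqToHom (Functor.assoc _ _ _) ≫
        Functor.whiskerLeft (X.map a) ((adjointPairsLeftLT X L R adj hu).psi b) =
      (adjointPairsLeftLT X L R adj hu).psi (a ≫ b) ≫
        Functor.whiskerRight (X.theta a b) (L k) ≫ eqToHom (Functor.assoc _ _ _) := by
  ext x
  simp only [inducedByAdjointPairs, adjointPairsLeftLT, Functor.comp_obj, Functor.whiskerLeft_comp,
    Functor.whiskerLeft_twice, Category.assoc, Functor.whiskerRight_twice,
    eqToHom_naturality_assoc, eqToHom_refl, Category.id_comp, NatTrans.comp_app,
    Functor.associator_inv_app, Functor.whiskerLeft_app, Functor.whiskerRight_app,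
    Functor.associator_hom_app, Functor.id_obj, Functor.comp_map, NatIso.isIso_inv_app,
    Functor.map_inv, Category.comp_id, IsIso.eq_inv_comp]
  rw [← Functor.map_comp_assoc, (X.theta a b).naturality]
  simp only [Functor.comp_map, Functor.map_comp, Category.assoc]
  rw [← Functor.map_comp_assoc (L k) ((X.map b).map _), ← Functor.map_comp (X.map b),
    ← (adj j).unit_naturality]
  simp only [Functor.map_comp, Category.assoc, IsIso.hom_inv_id_assoc, IsIso.hom_inv_id]
  exact Category.comp_id _

theorem adjointPairsLeftLT_isLT : (adjointPairsLeftLT X L R adj hu).IsLT :=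
  ⟨adjointPairsLeftLT_psi_id X L R adj hu, adjointPairsLeftLT_psi_comp X L R adj hu⟩

end

theorem adjointPairs_equivariance_general (X : OplaxOn obj)
    (L : ∀ i : I, obj i ⥤ objY i) (R : ∀ i : I, objY i ⥤ obj i)
    (adj : ∀ i : I, L i ⊣ R i) (hu : ∀ i : I, IsIso (adj i).unit) :
    (∀ {i j : I} (a : i ⟶ j), IsIso ((adjointPairsRightLT X L R adj).psi a)) ∧
    (adjointPairsLeftLT X L R adj hu).IsLT ∧
    (∀ {i j : I} (a : i ⟶ j), IsIso ((adjointPairsLeftLT X L R adj hu).psi a)) :=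
  ⟨fun {_ j} a => have := hu j; isIso_adjointPairsRightLT_psi X L R adj a,
    adjointPairsLeftLT_isLT X L R adj hu, isIso_adjointPairsLeftLT_psi X L R adj hu⟩

/-- Given an oplax functor `X : I → Cat` and adjoint pairs
`L_i ⊣ R_i` with all units `ε_i` natural isomorphisms:
(a) every `φ^R(a)` is an isomorphism, i.e. `(R, φ^R) : Y → X` is `I`-equivariant;
(b) the family `(L_i)_i`, together with `φ^L(a) := L_j X(a) ε_i⁻¹`, is a left
transformation `(L, φ^L) : X → Y`, and every `φ^L(a)` is an isomorphism,
i.e. `(L, φ^L)` is `I`-equivariant. -/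
theorem adjointPairs_equivariance (X : OplaxOn obj) (hX : X.IsOplax)
    (L : ∀ i : I, obj i ⥤ objY i) (R : ∀ i : I, objY i ⥤ obj i)
    (adj : ∀ i : I, L i ⊣ R i) (hu : ∀ i : I, IsIso (adj i).unit) :
    (∀ {i j : I} (a : i ⟶ j), IsIso ((adjointPairsRightLT X L R adj).psi a)) ∧
    (adjointPairsLeftLT X L R adj hu).IsLT ∧
    (∀ {i j : I} (a : i ⟶ j), IsIso ((adjointPairsLeftLT X L R adj hu).psi a)) :=
  adjointPairs_equivariance_general X L R adj hu
end
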